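/- Let (M,τ) be a tracial W*-probability space with faithful trace τ, and X₁,…,Xₙ ∈ M self-adjoint. If there exist ξ₁,…,ξₙ ∈ L²(M,τ) satisfying the conjugate relations (τ⊗τ)((∂_j P)(X)) = τ(ξ_j P(X)) for all polynomials P and all j = 1,…,n, then X₁,…,Xₙ satisfy no nontrivial algebraic relation: P(X₁,…,Xₙ) = 0 for P ∈ ℂ⟨Z₁,…,Zₙ⟩ implies P = 0. -/

import Mathlib

/- STATEMENT 5: If ξ₁,…,ξₙ ∈ L²(M,τ) satisfy the conjugate relations for the self-adjoint
tuple (X₁,…,Xₙ) in a tracial W*-probability space (M,τ) with faithful trace, then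
X₁,…,Xₙ satisfy no nontrivial algebraic relation: P(X₁,…,Xₙ) = 0 implies P = 0. -/

open scoped TensorProduct InnerProductSpace
noncomputable section

/-- The free noncommutative polynomial algebra ℂ⟨Z₁,…,Zₙ⟩. -/
abbrev FA (n : ℕ) := FreeAlgebra ℂ (Fin n)

/-- `D` is the free difference quotient ∂_j: the derivation into the tensor square with
`∂_j Z_i = δ_{ij} 1⊗1`. -/
def IsFDQ {n : ℕ} (j : Fin n) (D : FA n →ₗ[ℂ] FA n ⊗[ℂ] FA n) : Prop :=
  (∀ P Q : FA n, D (P * Q) = D P * (1 ⊗ₜ[ℂ] Q) + (P ⊗ₜ[ℂ] 1) * D Q) ∧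
  (∀ i : Fin n, D (FreeAlgebra.ι ℂ i) = if i = j then (1 : FA n) ⊗ₜ[ℂ] (1 : FA n) else 0)

variable {H : Type} [NormedAddCommGroup H] [InnerProductSpace ℂ H] [CompleteSpace H]

/-- The vector state `τ(a) = ⟨Ω, aΩ⟩` (the trace, in standard form). -/
def trVec (Ω : H) : (H →L[ℂ] H) →ₗ[ℂ] ℂ where
  toFun a := ⟪Ω, a Ω⟫_ℂ
  map_add' a b := by simp [inner_add_right]
  map_smul' c a := by simp [inner_smul_right]

/-- `τ ⊗ τ` on the (algebraic) tensor square of B(H). -/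
def ttB (Ω : H) : ((H →L[ℂ] H) ⊗[ℂ] (H →L[ℂ] H)) →ₗ[ℂ] ℂ :=
  TensorProduct.lift ((LinearMap.mul ℂ ℂ).compl₁₂ (trVec Ω) (trVec Ω))

/-- The partial trace `τ ⊗ id`. -/
def tid (Ω : H) : ((H →L[ℂ] H) ⊗[ℂ] (H →L[ℂ] H)) →ₗ[ℂ] (H →L[ℂ] H) :=
  TensorProduct.lift ((LinearMap.lsmul ℂ (H →L[ℂ] H)) ∘ₗ (trVec Ω))

/-- The partial trace `id ⊗ τ`. -/
def idt (Ω : H) : ((H →L[ℂ] H) ⊗[ℂ] (H →L[ℂ] H)) →ₗ[ℂ] (H →L[ℂ] H) :=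
  TensorProduct.lift ((LinearMap.lsmul ℂ (H →L[ℂ] H)) ∘ₗ (trVec Ω)).flip

/-- Evaluation `ev_X : ℂ⟨Z₁,…,Zₙ⟩ → B(H)`, `Z_i ↦ X_i`. -/
def ev {n : ℕ} (X : Fin n → (H →L[ℂ] H)) : FA n →ₐ[ℂ] (H →L[ℂ] H) :=
  FreeAlgebra.lift ℂ X

/-- `ev_X ⊗ ev_X` on the tensor square. -/
def evT {n : ℕ} (X : Fin n → (H →L[ℂ] H)) :
    (FA n ⊗[ℂ] FA n) →ₐ[ℂ] ((H →L[ℂ] H) ⊗[ℂ] (H →L[ℂ] H)) :=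
  Algebra.TensorProduct.map (ev X) (ev X)

/-- The von Neumann algebra `vN(X₁,…,Xₙ)` generated by the `X_i`
(double commutant of the self-adjoint family). -/
def vNX {n : ℕ} (X : Fin n → (H →L[ℂ] H)) : Set (H →L[ℂ] H) :=
  Set.centralizer (Set.centralizer (Set.range X))

/-!
Let `Δ_j = (id ⊗ τ ∘ ev_X) ∘ ∂_j`, a linear map from polynomials to polynomials. If `P(X) = 0`,
the Leibniz rule for `∂_j(Q P)` and the conjugate relation give `τ(Q(X) (Δ_j P)(X)) = 0` for every
polynomial `Q`; as the `X_i` are self-adjoint we may take `Q(X) = (Δ_j P)(X)^*`, and faithfulness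
gives `(Δ_j P)(X) = 0`. So the kernel of evaluation is stable under every `Δ_j`.

Since `τ(1) = 1`, `Δ_j (w Z_i) = δ_ij w + (terms of degree < |w|)`: `Δ_j` lowers the degree and, in
top degree, deletes a final letter `Z_j`. By induction on the degree, a kernel element `P` has
`Δ_j P = 0` for all `j`, so its top-degree part vanishes; in degree zero `P = c` with `c • 1 = 0`.
-/

open TensorProduct

namespace FreeMonoid

variable {α : Type*}

@[elab_as_elim]
theorem inductionOn_mul_of {motive : FreeMonoid α → Prop} (w : FreeMonoid α) (one : motive 1)
    (mul_of : ∀ w a, motive w → motive (w * of a)) : motive w :=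
  List.reverseRecOn (motive := fun l => motive (ofList l)) w.toList one
    fun l a ih => mul_of (ofList l) a ih

theorem mul_of_inj {u v : FreeMonoid α} {a b : α} : u * of a = v * of b ↔ u = v ∧ a = b :=
  List.append_singleton_inj (as := u.toList) (bs := v.toList)

end FreeMonoid

namespace FreeAlgebra

variable {R X : Type*} [CommSemiring R]

def monomial : FreeMonoid X →* FreeAlgebra R X := FreeMonoid.lift (ι R)

def coeff (w : FreeMonoid X) : FreeAlgebra R X →ₗ[R] R :=
  Finsupp.lapply w ∘ₗ (MonoidAlgebra.coeffLinearEquiv R).toLinearMap ∘ₗ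
    (equivMonoidAlgebraFreeMonoid (R := R) (X := X)).toLinearMap

def degreeLT (k : ℕ) : Submodule R (FreeAlgebra R X) :=
  (MonoidAlgebra.supported R R {w : FreeMonoid X | w.length < k}).comap
    (equivMonoidAlgebraFreeMonoid (R := R) (X := X)).toLinearMap

@[simp]
theorem monomial_of (a : X) : monomial (R := R) (FreeMonoid.of a) = ι R a :=
  FreeMonoid.lift_eval_of _ _

theorem equivMonoidAlgebraFreeMonoid_monomial (w : FreeMonoid X) :
    equivMonoidAlgebraFreeMonoid (monomial (R := R) w) = MonoidAlgebra.single w 1 := by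
  induction w using FreeMonoid.inductionOn' with
  | one => simp [MonoidAlgebra.one_def]
  | of_mul a w ih =>
    rw [map_mul, map_mul, ih, monomial_of]
    simp [equivMonoidAlgebraFreeMonoid, MonoidAlgebra.single_mul_single]

theorem coeff_apply (w : FreeMonoid X) (P : FreeAlgebra R X) :
    coeff w P = (equivMonoidAlgebraFreeMonoid P).coeff w := rfl

@[simp]
theorem coeff_monomial_self (w : FreeMonoid X) : coeff w (monomial (R := R) w) = 1 := by
  simp [coeff_apply, equivMonoidAlgebraFreeMonoid_monomial]

theorem coeff_monomial_of_ne {v w : FreeMonoid X} (h : w ≠ v) :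
    coeff v (monomial (R := R) w) = 0 := by
  rw [coeff_apply, equivMonoidAlgebraFreeMonoid_monomial, MonoidAlgebra.coeff_single,
    Finsupp.single_eq_of_ne' h]

theorem mem_degreeLT {k : ℕ} {P : FreeAlgebra R X} :
    P ∈ degreeLT k ↔ ∀ w : FreeMonoid X, k ≤ w.length → coeff w P = 0 := by
  simp [degreeLT, MonoidAlgebra.mem_supported', coeff_apply]

theorem degreeLT_eq_span (k : ℕ) :
    degreeLT (R := R) (X := X) k = Submodule.span R (monomial '' {w | w.length < k}) := by
  rw [degreeLT, Submodule.comap_equiv_eq_map_symm, MonoidAlgebra.supported_eq_span_single,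
    Submodule.map_span, ← Set.image_comp]
  congr 1
  refine Set.image_congr fun w _ => ?_
  simp [AlgEquiv.symm_apply_eq, equivMonoidAlgebraFreeMonoid_monomial]

theorem monomial_mem_degreeLT {k : ℕ} {w : FreeMonoid X} (hw : w.length < k) :
    monomial w ∈ degreeLT (R := R) k :=
  degreeLT_eq_span (R := R) k ▸ Submodule.subset_span ⟨w, hw, rfl⟩

theorem degreeLT_mono : Monotone (degreeLT (R := R) (X := X)) := fun _ _ hkl =>
  Submodule.comap_mono (MonoidAlgebra.supported_mono fun _ hw => lt_of_lt_of_le hw hkl)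

theorem exists_mem_degreeLT (P : FreeAlgebra R X) : ∃ k, P ∈ degreeLT k := by
  refine ⟨(equivMonoidAlgebraFreeMonoid P).coeff.support.sup FreeMonoid.length + 1,
    mem_degreeLT.mpr fun w hw => ?_⟩
  by_contra h
  rw [coeff_apply] at h
  have := Finset.le_sup (f := FreeMonoid.length) (Finsupp.mem_support_iff.mpr h)
  omega

theorem eq_algebraMap_of_mem_degreeLT_one {P : FreeAlgebra R X} (hP : P ∈ degreeLT 1) :
    P = algebraMap R _ (coeff 1 P) := by
  rw [degreeLT_eq_span] at hP
  induction hP using Submodule.span_induction with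
  | mem x hx =>
    obtain ⟨w, hw, rfl⟩ := hx
    obtain rfl : w = 1 := FreeMonoid.length_eq_zero.mp (Nat.lt_one_iff.mp hw)
    rw [coeff_monomial_self, map_one, map_one]
  | zero => simp
  | add x y _ _ hx hy => rw [map_add, map_add, ← hx, ← hy]
  | smul r x _ hx => rw [map_smul, smul_eq_mul, map_mul, ← hx, Algebra.smul_def]

end FreeAlgebra

namespace TensorProduct

variable {R M N : Type*} [CommSemiring R] [AddCommMonoid M] [Module R M] [AddCommMonoid N]
  [Module R N]

def sliceRight (φ : N →ₗ[R] R) : M ⊗[R] N →ₗ[R] M :=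
  (TensorProduct.rid R M).toLinearMap ∘ₗ φ.lTensor M

@[simp]
theorem sliceRight_tmul (φ : N →ₗ[R] R) (m : M) (n : N) : sliceRight φ (m ⊗ₜ n) = φ n • m := by
  simp [sliceRight]

end TensorProduct

namespace FreeAlgebra

variable {R X : Type*} [CommRing R]

def leftDegreeLT (k : ℕ) : Submodule R (FreeAlgebra R X ⊗[R] FreeAlgebra R X) :=
  Submodule.map₂ (TensorProduct.mk R _ _) (degreeLT k) ⊤

theorem tmul_mem_leftDegreeLT {k : ℕ} {a : FreeAlgebra R X} (ha : a ∈ degreeLT k)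
    (b : FreeAlgebra R X) : a ⊗ₜ b ∈ leftDegreeLT k :=
  Submodule.apply_mem_map₂ _ ha Submodule.mem_top

theorem leftDegreeLT_mono : Monotone (leftDegreeLT (R := R) (X := X)) := fun _ _ hkl =>
  Submodule.map₂_le_map₂_left (degreeLT_mono hkl)

theorem mul_one_tmul_mem_leftDegreeLT {k : ℕ} {x : FreeAlgebra R X ⊗[R] FreeAlgebra R X}
    (hx : x ∈ leftDegreeLT k) (b : FreeAlgebra R X) : x * (1 ⊗ₜ b) ∈ leftDegreeLT k := by
  suffices leftDegreeLT k ≤ (leftDegreeLT k).comap (LinearMap.mulRight R (1 ⊗ₜ[R] b)) from this hx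
  refine Submodule.map₂_le.mpr fun a ha c _ => ?_
  simpa using tmul_mem_leftDegreeLT ha (c * b)

theorem sliceRight_mem_degreeLT {k : ℕ} (φ : FreeAlgebra R X →ₗ[R] R)
    {x : FreeAlgebra R X ⊗[R] FreeAlgebra R X} (hx : x ∈ leftDegreeLT k) :
    sliceRight φ x ∈ degreeLT k := by
  suffices leftDegreeLT k ≤ (degreeLT k).comap (sliceRight φ) from this hx
  exact Submodule.map₂_le.mpr fun a ha c _ => by simpa using Submodule.smul_mem _ (φ c) ha

theorem map_one_eq_zero_of_leibniz {D : FreeAlgebra R X →ₗ[R] FreeAlgebra R X ⊗[R] FreeAlgebra R X}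
    (hmul : ∀ P Q, D (P * Q) = D P * (1 ⊗ₜ Q) + (P ⊗ₜ 1) * D Q) : D 1 = 0 := by
  simpa [← Algebra.TensorProduct.one_def] using hmul 1 1

theorem map_monomial_mem_leftDegreeLT [DecidableEq X]
    {D : FreeAlgebra R X →ₗ[R] FreeAlgebra R X ⊗[R] FreeAlgebra R X}
    (hmul : ∀ P Q, D (P * Q) = D P * (1 ⊗ₜ Q) + (P ⊗ₜ 1) * D Q)
    {j : X} (hι : ∀ i, D (ι R i) = if i = j then 1 ⊗ₜ 1 else 0) (w : FreeMonoid X) :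
    D (monomial w) ∈ leftDegreeLT w.length := by
  induction w using FreeMonoid.inductionOn_mul_of with
  | one => simp [map_one_eq_zero_of_leibniz hmul]
  | mul_of w i ih =>
    rw [map_mul, monomial_of, hmul, FreeMonoid.length_mul, FreeMonoid.length_of]
    refine add_mem (leftDegreeLT_mono (Nat.le_succ _) (mul_one_tmul_mem_leftDegreeLT ih _)) ?_
    rw [hι i]
    split_ifs
    · simpa using tmul_mem_leftDegreeLT (monomial_mem_degreeLT (Nat.lt_succ_self _)) 1
    · simp

section Leibniz

variable [DecidableEq X] {D : FreeAlgebra R X →ₗ[R] FreeAlgebra R X ⊗[R] FreeAlgebra R X} {j : X}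
  {φ : FreeAlgebra R X →ₗ[R] R}

theorem sliceRight_map_monomial_mul_of
    (hmul : ∀ P Q, D (P * Q) = D P * (1 ⊗ₜ Q) + (P ⊗ₜ 1) * D Q)
    (hι : ∀ i, D (ι R i) = if i = j then 1 ⊗ₜ 1 else 0) (hφ : φ 1 = 1)
    (w : FreeMonoid X) (i : X) :
    sliceRight φ (D (monomial (w * FreeMonoid.of i))) =
      sliceRight φ (D (monomial w) * (1 ⊗ₜ ι R i)) + if i = j then monomial w else 0 := by
  rw [map_mul, monomial_of, hmul, map_add, hι i]
  split_ifs <;> simp [hφ, ← Algebra.TensorProduct.one_def]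

theorem coeff_sliceRight_map
    (hmul : ∀ P Q, D (P * Q) = D P * (1 ⊗ₜ Q) + (P ⊗ₜ 1) * D Q)
    (hι : ∀ i, D (ι R i) = if i = j then 1 ⊗ₜ 1 else 0) (hφ : φ 1 = 1)
    (u : FreeMonoid X) {P : FreeAlgebra R X} (hP : P ∈ degreeLT (u.length + 2)) :
    coeff u (sliceRight φ (D P)) = coeff (u * FreeMonoid.of j) P := by
  rw [degreeLT_eq_span] at hP
  induction hP using Submodule.span_induction with
  | mem x hx =>
    obtain ⟨w, hw, rfl⟩ := hx
    induction w using FreeMonoid.inductionOn_mul_of with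
    | one =>
      have hne : (1 : FreeMonoid X) ≠ u * FreeMonoid.of j := fun h => by
        simpa using congrArg FreeMonoid.length h
      rw [map_one, map_one_eq_zero_of_leibniz hmul, map_zero, map_zero, ← map_one monomial,
        coeff_monomial_of_ne hne]
    | mul_of v i _ =>
      have hvu : v.length ≤ u.length := by simp at hw; omega
      have hlow : coeff u (sliceRight φ (D (monomial v) * (1 ⊗ₜ ι R i))) = 0 :=
        mem_degreeLT.mp (sliceRight_mem_degreeLT φ (mul_one_tmul_mem_leftDegreeLT
          (map_monomial_mem_leftDegreeLT hmul hι v) _)) u hvu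
      rw [sliceRight_map_monomial_mul_of hmul hι hφ, map_add, hlow, zero_add]
      by_cases h : v = u ∧ i = j
      · obtain ⟨rfl, rfl⟩ := h
        rw [if_pos rfl, coeff_monomial_self, coeff_monomial_self]
      · rw [coeff_monomial_of_ne (mt FreeMonoid.mul_of_inj.mp h)]
        split_ifs with hij
        · exact coeff_monomial_of_ne fun hv => h ⟨hv, hij⟩
        · exact map_zero _
  | zero => simp
  | add x y _ _ hx hy => simp [hx, hy]
  | smul r x _ hx => simp [hx]

theorem sliceRight_map_mem_degreeLT
    (hmul : ∀ P Q, D (P * Q) = D P * (1 ⊗ₜ Q) + (P ⊗ₜ 1) * D Q)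
    (hι : ∀ i, D (ι R i) = if i = j then 1 ⊗ₜ 1 else 0) (hφ : φ 1 = 1)
    {k : ℕ} {P : FreeAlgebra R X} (hP : P ∈ degreeLT (k + 1)) :
    sliceRight φ (D P) ∈ degreeLT k := by
  refine mem_degreeLT.mpr fun u hu => ?_
  rw [coeff_sliceRight_map hmul hι hφ u (degreeLT_mono (by omega) hP)]
  exact mem_degreeLT.mp hP _ (by simp; omega)

end Leibniz

section DifferenceQuotients

variable [DecidableEq X] {D : X → FreeAlgebra R X →ₗ[R] FreeAlgebra R X ⊗[R] FreeAlgebra R X}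
  {φ : FreeAlgebra R X →ₗ[R] R}

theorem mem_degreeLT_of_sliceRight_map_eq_zero
    (hmul : ∀ j P Q, D j (P * Q) = D j P * (1 ⊗ₜ Q) + (P ⊗ₜ 1) * D j Q)
    (hι : ∀ j i, D j (ι R i) = if i = j then 1 ⊗ₜ 1 else 0) (hφ : φ 1 = 1)
    {k : ℕ} {P : FreeAlgebra R X} (hP : P ∈ degreeLT (k + 2))
    (h : ∀ j, sliceRight φ (D j P) = 0) : P ∈ degreeLT (k + 1) := by
  refine mem_degreeLT.mpr fun w hw => ?_
  induction w using FreeMonoid.inductionOn_mul_of with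
  | one => simp at hw
  | mul_of u j _ =>
    rcases (by simpa using hw : k ≤ u.length).eq_or_lt with hu | hu
    · rw [← coeff_sliceRight_map (hmul j) (hι j) hφ u (hu ▸ hP), h j, map_zero]
    · exact mem_degreeLT.mp hP _ (by simp; omega)

theorem injective_of_forall_map_sliceRight_eq_zero {A : Type*} [Semiring A] [Algebra R A]
    (f : FreeAlgebra R X →ₐ[R] A) (hf : Function.Injective (algebraMap R A))
    (hmul : ∀ j P Q, D j (P * Q) = D j P * (1 ⊗ₜ Q) + (P ⊗ₜ 1) * D j Q)
    (hι : ∀ j i, D j (ι R i) = if i = j then 1 ⊗ₜ 1 else 0) (hφ : φ 1 = 1)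
    (hker : ∀ j P, f P = 0 → f (sliceRight φ (D j P)) = 0) : Function.Injective f := by
  refine (injective_iff_map_eq_zero f).mpr fun P hP => ?_
  suffices ∀ k, ∀ P ∈ degreeLT (k + 1), f P = 0 → P = 0 by
    obtain ⟨k, hk⟩ := exists_mem_degreeLT P
    exact this k P (degreeLT_mono k.le_succ hk) hP
  intro k
  induction k with
  | zero =>
    intro P hP1 hP
    rw [eq_algebraMap_of_mem_degreeLT_one hP1] at hP ⊢
    rw [AlgHom.commutes, ← map_zero (algebraMap R A)] at hP
    rw [hf hP, map_zero]
  | succ k ih =>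
    intro P hP hfP
    refine ih P (mem_degreeLT_of_sliceRight_map_eq_zero hmul hι hφ hP fun j => ?_) hfP
    exact ih _ (sliceRight_map_mem_degreeLT (hmul j) (hι j) hφ hP) (hker j P hfP)

end DifferenceQuotients

end FreeAlgebra

theorem ev_mem {n : ℕ} (M : VonNeumannAlgebra H) {X : Fin n → (H →L[ℂ] H)} (hXM : ∀ i, X i ∈ M)
    (P : FA n) : ev X P ∈ M := by
  have : Algebra.adjoin ℂ (Set.range X) ≤ M.toSubalgebra :=
    Algebra.adjoin_le (Set.range_subset_iff.mpr hXM)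
  exact this (by rw [Algebra.adjoin_range_eq_range_freeAlgebra_lift]; exact ⟨P, rfl⟩)

theorem star_ev_mem_range {n : ℕ} {X : Fin n → (H →L[ℂ] H)} (hXsa : ∀ i, IsSelfAdjoint (X i))
    (P : FA n) : star (ev X P) ∈ (ev X).range := by
  have hstar : star (Set.range X) = Set.range X := by
    ext a
    simp only [Set.mem_star, Set.mem_range]
    refine exists_congr fun i => ⟨fun h => ?_, fun h => ?_⟩
    · rw [← star_star a, ← h, (hXsa i).star_eq]
    · rw [← h, (hXsa i).star_eq]
  have hrange : (ev X).range = (StarAlgebra.adjoin ℂ (Set.range X)).toSubalgebra := by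
    rw [StarAlgebra.adjoin_toSubalgebra, hstar, Set.union_self,
      Algebra.adjoin_range_eq_range_freeAlgebra_lift]
    rfl
  have hP : ev X P ∈ StarAlgebra.adjoin ℂ (Set.range X) :=
    StarSubalgebra.mem_toSubalgebra.mp (hrange ▸ ⟨P, rfl⟩)
  exact hrange ▸ StarSubalgebra.mem_toSubalgebra.mpr (star_mem hP)

theorem ttB_evT_tmul_one_mul {H : Type} [NormedAddCommGroup H] [InnerProductSpace ℂ H] {n : ℕ}
    (Ω : H) (X : Fin n → (H →L[ℂ] H)) (Q : FA n) (y : FA n ⊗[ℂ] FA n) :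
    ttB Ω (evT X ((Q ⊗ₜ 1) * y)) =
      trVec Ω (ev X Q * ev X (sliceRight (trVec Ω ∘ₗ (ev X).toLinearMap) y)) := by
  induction y using TensorProduct.induction_on with
  | zero => simp
  | tmul a b => simp [evT, ttB, mul_comm]
  | add x y hx hy => simp only [mul_add, map_add, hx, hy]

theorem ev_sliceRight_map_eq_zero {n : ℕ} {Ω : H} {X : Fin n → (H →L[ℂ] H)}
    (hfaith : ∀ a ∈ (ev X).range, trVec Ω (star a * a) = 0 → a = 0)
    (hXsa : ∀ i, IsSelfAdjoint (X i)) {D : FA n →ₗ[ℂ] FA n ⊗[ℂ] FA n}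
    (hmul : ∀ P Q : FA n, D (P * Q) = D P * (1 ⊗ₜ Q) + (P ⊗ₜ 1) * D Q) {ξ : H}
    (hconj : ∀ P : FA n, ttB Ω (evT X (D P)) = ⟪(star (ev X P)) Ω, ξ⟫_ℂ)
    {P : FA n} (hP : ev X P = 0) :
    ev X (sliceRight (trVec Ω ∘ₗ (ev X).toLinearMap) (D P)) = 0 := by
  set c := ev X (sliceRight (trVec Ω ∘ₗ (ev X).toLinearMap) (D P))
  -- Expand `∂(Q P)` by Leibniz: `∂Q · (1 ⊗ P)` dies under evaluation, and `(Q P)(X) = 0`.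
  have horth : ∀ Q : FA n, trVec Ω (ev X Q * c) = 0 := fun Q => by
    have hQP := hconj (Q * P)
    have hright : evT X (D Q * (1 ⊗ₜ P)) = 0 := by simp [evT, hP]
    rwa [map_mul (ev X), hP, mul_zero, star_zero, zero_apply, inner_zero_left, hmul,
      map_add, map_add, hright, map_zero, zero_add, ttB_evT_tmul_one_mul] at hQP
  obtain ⟨Q, hQ⟩ := star_ev_mem_range hXsa (sliceRight (trVec Ω ∘ₗ (ev X).toLinearMap) (D P))
  exact hfaith c ⟨_, rfl⟩ (hQ ▸ horth Q)

theorem no_algebraic_relations_of_conjugate_relations_general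
    {n : ℕ} (M : VonNeumannAlgebra H) (Ω : H)
    -- τ := trVec Ω is a state (‖Ω‖ = 1), Ω is cyclic (H is the standard form L²(M,τ)),
    -- τ is tracial and faithful on M:
    (hΩ : ‖Ω‖ = 1)
    (hfaith : ∀ a : H →L[ℂ] H, a ∈ M → trVec Ω (star a * a) = 0 → a = 0)
    -- self-adjoint generators X₁,…,Xₙ in M:
    (X : Fin n → (H →L[ℂ] H)) (hXM : ∀ i, X i ∈ M) (hXsa : ∀ i, IsSelfAdjoint (X i))
    -- the free difference quotients:
    (D : Fin n → (FA n →ₗ[ℂ] FA n ⊗[ℂ] FA n)) (hD : ∀ j, IsFDQ j (D j))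
    -- ξ₁,…,ξₙ ∈ L²(M,τ) satisfy the conjugate relations
    -- (τ⊗τ)((∂_j P)(X)) = τ(ξ_j · P(X)) for all P:
    (ξ : Fin n → H)
    (hconj : ∀ j, ∀ P : FA n, ttB Ω (evT X (D j P)) = ⟪(star (ev X P)) Ω, ξ j⟫_ℂ) :
    ∀ P : FA n, ev X P = 0 → P = 0 := by
  have : Nontrivial H := nontrivial_of_ne Ω 0 (by rintro rfl; simp at hΩ)
  have hτ : (trVec Ω ∘ₗ (ev X).toLinearMap) 1 = 1 := by simp [trVec, hΩ]
  have hfaith_range : ∀ a ∈ (ev X).range, trVec Ω (star a * a) = 0 → a = 0 := by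
    rintro _ ⟨P, rfl⟩
    exact hfaith _ (ev_mem M hXM P)
  refine (injective_iff_map_eq_zero (ev X)).mp ?_
  exact FreeAlgebra.injective_of_forall_map_sliceRight_eq_zero (ev X) (algebraMap ℂ _).injective
    (fun j => (hD j).1) (fun j => (hD j).2) hτ
    fun j _ hP => ev_sliceRight_map_eq_zero hfaith_range hXsa (hD j).1 (hconj j) hP

theorem no_algebraic_relations_of_conjugate_relations
    {n : ℕ} (M : VonNeumannAlgebra H) (Ω : H)
    -- τ := trVec Ω is a state (‖Ω‖ = 1), Ω is cyclic (H is the standard form L²(M,τ)),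
    -- τ is tracial and faithful on M:
    (hΩ : ‖Ω‖ = 1)
    (hcyc : Dense {x : H | ∃ a : H →L[ℂ] H, a ∈ M ∧ a Ω = x})
    (htr : ∀ a b : H →L[ℂ] H, a ∈ M → b ∈ M → trVec Ω (a * b) = trVec Ω (b * a))
    (hfaith : ∀ a : H →L[ℂ] H, a ∈ M → trVec Ω (star a * a) = 0 → a = 0)
    -- self-adjoint generators X₁,…,Xₙ in M:
    (X : Fin n → (H →L[ℂ] H)) (hXM : ∀ i, X i ∈ M) (hXsa : ∀ i, IsSelfAdjoint (X i))
    -- the free difference quotients: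
    (D : Fin n → (FA n →ₗ[ℂ] FA n ⊗[ℂ] FA n)) (hD : ∀ j, IsFDQ j (D j))
    -- ξ₁,…,ξₙ ∈ L²(M,τ) satisfy the conjugate relations
    -- (τ⊗τ)((∂_j P)(X)) = τ(ξ_j · P(X)) for all P:
    (ξ : Fin n → H)
    (hconj : ∀ j, ∀ P : FA n, ttB Ω (evT X (D j P)) = ⟪(star (ev X P)) Ω, ξ j⟫_ℂ) :
    ∀ P : FA n, ev X P = 0 → P = 0 :=
  no_algebraic_relations_of_conjugate_relations_general M Ω hΩ hfaith X hXM hXsa D hD ξ hconj
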